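/- For every real x, the integer translates of the weight function W form a partition of unity: Σ_{i ∈ ℤ} W(x − i) = 1, where all but at most four terms of the sum vanish (only integers i with x − 2 < i < x + 2 contribute). -/

import Mathlib

/-- The piecewise-cubic weight function. -/
noncomputable def W (x : ℝ) : ℝ :=
  if x < -2 then 0
  else if x < -1 then (1/6) * (x + 2)^3
  else if x < 0 then -(1/2) * x^3 - x^2 + 2/3
  else if x < 1 then (1/2) * x^3 - x^2 + 2/3
  else if x < 2 then -(1/6) * (x - 2)^3
  else 0

/-!
On `[0, 1)` exactly the four translates `W (y + 1)`, `W y`, `W (y - 1)`, `W (y - 2)` can be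
nonzero, each given by a different cubic piece, and these four cubics sum to `1` identically.
The general case reduces to this one by shifting the summation index by `⌊x⌋`.
-/

lemma W_eq_zero_of_two_le_abs {y : ℝ} (hy : 2 ≤ |y|) : W y = 0 := by
  rcases le_abs'.1 hy with hy | hy
  · rcases hy.lt_or_eq with hy | rfl
    · rw [W, if_pos hy]
    · norm_num [W]
  · rw [W, if_neg, if_neg, if_neg, if_neg, if_neg] <;> linarith

lemma abs_lt_two_of_W_ne_zero {y : ℝ} (hy : W y ≠ 0) : |y| < 2 :=
  not_le.1 fun h => hy (W_eq_zero_of_two_le_abs h)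

lemma W_of_neg_two_le_of_lt_neg_one {y : ℝ} (h : -2 ≤ y) (h' : y < -1) :
    W y = (1/6) * (y + 2)^3 := by
  rw [W, if_neg (by linarith), if_pos h']

lemma W_of_neg_one_le_of_neg {y : ℝ} (h : -1 ≤ y) (h' : y < 0) :
    W y = -(1/2) * y^3 - y^2 + 2/3 := by
  rw [W, if_neg (by linarith), if_neg (by linarith), if_pos h']

lemma W_of_nonneg_of_lt_one {y : ℝ} (h : 0 ≤ y) (h' : y < 1) :
    W y = (1/2) * y^3 - y^2 + 2/3 := by
  rw [W, if_neg (by linarith), if_neg (by linarith), if_neg (by linarith), if_pos h']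

lemma W_of_one_le_of_lt_two {y : ℝ} (h : 1 ≤ y) (h' : y < 2) :
    W y = -(1/6) * (y - 2)^3 := by
  rw [W, if_neg (by linarith), if_neg (by linarith), if_neg (by linarith), if_neg (by linarith),
    if_pos h']

lemma W_add_one_add_W_add_W_sub_one_add_W_sub_two {y : ℝ} (h0 : 0 ≤ y) (h1 : y < 1) :
    W (y + 1) + W y + W (y - 1) + W (y - 2) = 1 := by
  rw [W_of_one_le_of_lt_two (by linarith) (by linarith), W_of_nonneg_of_lt_one h0 h1,
    W_of_neg_one_le_of_neg (by linarith) (by linarith),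
    W_of_neg_two_le_of_lt_neg_one (by linarith) (by linarith)]
  ring

lemma tsum_W_sub_int_of_nonneg_of_lt_one {y : ℝ} (h0 : 0 ≤ y) (h1 : y < 1) :
    ∑' i : ℤ, W (y - i) = 1 := by
  rw [tsum_eq_sum (s := {-1, 0, 1, 2})]
  · simpa [add_assoc] using W_add_one_add_W_add_W_sub_one_add_W_sub_two h0 h1
  · intro i hi
    simp only [Finset.mem_insert, Finset.mem_singleton] at hi
    apply W_eq_zero_of_two_le_abs
    rcases (by omega : i ≤ -2 ∨ 3 ≤ i) with hi | hi
    · have : (i : ℝ) ≤ -2 := by exact_mod_cast hi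
      exact le_abs.2 (Or.inl (by linarith))
    · have : (3 : ℝ) ≤ i := by exact_mod_cast hi
      exact le_abs.2 (Or.inr (by linarith))

/-- The integer translates of the weight function `W` form a partition of
unity; only the (at most four) integers `i` with `x − 2 < i < x + 2` can
contribute a nonzero term. -/
theorem weight_partition_of_unity (x : ℝ) :
    (∀ i : ℤ, W (x - i) ≠ 0 → x - 2 < (i : ℝ) ∧ (i : ℝ) < x + 2) ∧
    ∑' i : ℤ, W (x - i) = 1 := by
  refine ⟨fun i hi => ?_, ?_⟩
  · obtain ⟨hlo, hhi⟩ := abs_lt.1 (abs_lt_two_of_W_ne_zero hi)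
    constructor <;> linarith
  · rw [← (Equiv.addRight ⌊x⌋).tsum_eq]
    simp only [Equiv.coe_addRight, Int.cast_add, sub_add_eq_sub_sub_swap, Int.self_sub_floor]
    exact tsum_W_sub_int_of_nonneg_of_lt_one (Int.fract_nonneg x) (Int.fract_lt_one x)
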